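/- (Temporal oscillation bound, Nikolskii case) Let α ∈ (0,1) and suppose M := sup_{h ∈ (0,T)} h^{−α} ‖τ_h f‖_{L²} < ∞. Then there exists a constant C, depending only on α (in particular independent of T, N, τ and f), such that (1/τ) · Σ_{n=1}^{N} ∫_ℝ ∫_ℝ a_n(s) a_n(t) ‖f(s) − f(t)‖_H² dt ds ≤ C · τ^{2α} · M². -/

import Mathlib

open MeasureTheory
open scoped ENNReal

/-- The interval `J_n`: `J_0 = [0, τ/2]` and `J_n = [nτ − τ/2, nτ + τ/2]` for `n ≥ 1`,
where `τ = T/(N+1)`. -/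
noncomputable def Jint (T : ℝ) (N : ℕ) (n : ℕ) : Set ℝ :=
  let τ := T / (N + 1)
  if n = 0 then Set.Icc 0 (τ / 2)
  else Set.Icc ((n : ℝ) * τ - τ / 2) ((n : ℝ) * τ + τ / 2)

/-- The weight functions `a_n` from the robust temporal discretization:
`a_1(t) = 1_{J_0}(t) + ((t_1 + τ/2 − t)/τ)·1_{J_1}(t)` and, for `n ≥ 2`,
`a_n(t) = ((t − (t_{n−1} − τ/2))/τ)·1_{J_{n−1}}(t) + ((t_n + τ/2 − t)/τ)·1_{J_n}(t)`,
where `τ = T/(N+1)` and `t_n = nτ`. -/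
noncomputable def aWeight (T : ℝ) (N : ℕ) (n : ℕ) (t : ℝ) : ℝ :=
  let τ := T / (N + 1)
  if n = 1 then
    (Jint T N 0).indicator (fun _ => (1 : ℝ)) t
      + (Jint T N 1).indicator (fun s => (τ + τ / 2 - s) / τ) t
  else
    (Jint T N (n - 1)).indicator (fun s => (s - (((n : ℝ) - 1) * τ - τ / 2)) / τ) t
      + (Jint T N n).indicator (fun s => ((n : ℝ) * τ + τ / 2 - s) / τ) t

/-- The temporal tempOsc
`(1/τ) Σ_{n=1}^N ∫_ℝ ∫_ℝ a_n(s) a_n(t) ‖f(s) − f(t)‖² dt ds`. -/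
noncomputable def tempOsc (T : ℝ) (N : ℕ) {H : Type*} [NormedAddCommGroup H]
    (f : ℝ → H) : ℝ≥0∞ :=
  (ENNReal.ofReal (T / (N + 1)))⁻¹ *
    ∑ n ∈ Finset.Icc 1 N,
      ∫⁻ s, ∫⁻ t,
        ENNReal.ofReal (aWeight T N n s) * ENNReal.ofReal (aWeight T N n t)
          * ENNReal.ofReal (‖f s - f t‖ ^ 2) ∂(volume) ∂(volume)

/-- The squared `L²` norm of the time increment, `‖τ_h f‖_{L²}² = ∫_0^{T−h} ‖f(t+h) − f(t)‖² dt`. -/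
noncomputable def sqIncrementNorm (T : ℝ) {H : Type*} [NormedAddCommGroup H]
    (f : ℝ → H) (h : ℝ) : ℝ≥0∞ :=
  ∫⁻ t in Set.Ioc (0 : ℝ) (T - h), ENNReal.ofReal (‖f (t + h) - f t‖ ^ 2)

/-! Each weight `a_n` is at most `2` and vanishes outside `[0, T] ∩ [t_n − 3τ/2, t_n + τ/2]`.
These windows have length `2τ` and spacing `τ`, so a point lies in at most three of them, and
the sum is at most `12` times the integral of `‖f s − f t‖²` over the strip `|t − s| ≤ 2τ` of
`[0, T]²`. By symmetry and the substitution `t = s + h` this is at most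
`2 ∫_0^{2τ} ‖τ_h f‖² dh ≤ 2 · (2τ)^{2α} M² · 2τ`, and dividing by `τ` gives `C = 48 · 2^{2α}`. -/

open Set Function
open scoped Finset

theorem Finset.sum_lintegral_le_lintegral_sum {α ι : Type*} [MeasurableSpace α] {μ : Measure α}
    (s : Finset ι) (f : ι → α → ℝ≥0∞) :
    ∑ i ∈ s, ∫⁻ a, f i a ∂μ ≤ ∫⁻ a, ∑ i ∈ s, f i a ∂μ := by
  classical
  induction s using Finset.induction_on with
  | empty => simp
  | insert i s hi ih =>
    simp only [Finset.sum_insert hi]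
    exact (add_le_add le_rfl ih).trans (le_lintegral_add _ _)

theorem card_filter_mem_Icc_le_three {τ a b : ℝ} (hτ : 0 < τ) (hab : a + b ≤ 2 * τ)
    (s : Finset ℕ) (x : ℝ) :
    #(s.filter fun n : ℕ => x ∈ Icc (n * τ - a) (n * τ + b)) ≤ 3 := by
  set m := ⌈(x - b) / τ⌉₊
  have hsub : s.filter (fun n : ℕ => x ∈ Icc (n * τ - a) (n * τ + b)) ⊆ Finset.Icc m (m + 2) := by
    intro n hn
    obtain ⟨-, hxl, hxu⟩ := Finset.mem_filter.1 hn
    have hlow : (x - b) / τ ≤ n := by rw [div_le_iff₀ hτ]; linarith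
    have hup : (n : ℝ) ≤ (x - b) / τ + 2 := by
      rw [div_add' _ _ _ hτ.ne', le_div_iff₀ hτ]; linarith
    have hm : (x - b) / τ ≤ m := Nat.le_ceil _
    refine Finset.mem_Icc.2 ⟨Nat.ceil_le.2 (by exact_mod_cast hlow), ?_⟩
    have : (n : ℝ) ≤ m + 2 := by linarith
    exact_mod_cast this
  simpa [Nat.card_Icc, add_assoc, Nat.add_sub_cancel_left] using Finset.card_le_card hsub

theorem sum_indicator_mul_indicator_le {τ a b : ℝ} (hτ : 0 < τ) (hab : a + b ≤ 2 * τ)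
    (s : Finset ℕ) (x y : ℝ) :
    ∑ n ∈ s, (Icc (n * τ - a) (n * τ + b)).indicator (1 : ℝ → ℝ≥0∞) x
        * (Icc (n * τ - a) (n * τ + b)).indicator 1 y
      ≤ 3 * (Icc (-(2 * τ)) (2 * τ)).indicator 1 (y - x) := by
  set I := (Icc (-(2 * τ)) (2 * τ)).indicator (1 : ℝ → ℝ≥0∞) (y - x)
  have hterm : ∀ n : ℕ, (Icc (n * τ - a) (n * τ + b)).indicator (1 : ℝ → ℝ≥0∞) x
      * (Icc (n * τ - a) (n * τ + b)).indicator 1 y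
      ≤ (Icc (n * τ - a) (n * τ + b)).indicator 1 x * I := by
    intro n
    by_cases hx : x ∈ Icc (n * τ - a) (n * τ + b)
    · by_cases hy : y ∈ Icc (n * τ - a) (n * τ + b)
      · have hxy : y - x ∈ Icc (-(2 * τ)) (2 * τ) := by
          constructor <;> linarith [hx.1, hx.2, hy.1, hy.2]
        simp [I, hx, hy, hxy]
      · simp [hy]
    · simp [hx]
  calc _ ≤ ∑ n ∈ s, (Icc (n * τ - a) (n * τ + b)).indicator 1 x * I :=
        Finset.sum_le_sum fun n _ => hterm n
    _ = #(s.filter fun n : ℕ => x ∈ Icc (n * τ - a) (n * τ + b)) * I := by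
        rw [← Finset.sum_mul]
        simp only [indicator_apply, Pi.one_apply, Finset.sum_boole]
    _ ≤ 3 * I := by
        gcongr
        exact_mod_cast card_filter_mem_Icc_le_three hτ hab s x

section Strip

variable {G : ℝ → ℝ → ℝ≥0∞}

theorem lintegral_lintegral_eq_lintegral_lintegral_add (hG : Measurable (uncurry G)) :
    ∫⁻ s, ∫⁻ t, G s t = ∫⁻ h, ∫⁻ s, G s (s + h) := by
  calc ∫⁻ s, ∫⁻ t, G s t = ∫⁻ s, ∫⁻ h, G s (s + h) :=
        lintegral_congr fun s => (lintegral_add_left_eq_self (G s) s).symm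
    _ = ∫⁻ h, ∫⁻ s, G s (s + h) :=
        lintegral_lintegral_swap
          (hG.comp (measurable_fst.prodMk (measurable_fst.add measurable_snd))).aemeasurable

theorem lintegral_add_neg_eq_of_symm (hsymm : ∀ s t, G s t = G t s) (h : ℝ) :
    ∫⁻ s, G s (s + -h) = ∫⁻ s, G s (s + h) := by
  rw [← lintegral_add_right_eq_self _ h]
  simp only [add_neg_cancel_right]
  exact lintegral_congr fun s => hsymm _ _

theorem lintegral_lintegral_indicator_sub_le (hG : Measurable (uncurry G))
    (hsymm : ∀ s t, G s t = G t s) (δ : ℝ) :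
    ∫⁻ s, ∫⁻ t, (Icc (-δ) δ).indicator 1 (t - s) * G s t
      ≤ 2 * ∫⁻ h in Icc 0 δ, ∫⁻ s, G s (s + h) := by
  set Φ : ℝ → ℝ≥0∞ := fun h => ∫⁻ s, G s (s + h)
  have hmeas : Measurable
      (uncurry fun s t => (Icc (-δ) δ).indicator (1 : ℝ → ℝ≥0∞) (t - s) * G s t) :=
    ((measurable_one.indicator measurableSet_Icc).comp (measurable_snd.sub measurable_fst)).mul hG
  have hreflect : ∫⁻ h in Icc (-δ) 0, Φ h = ∫⁻ h in Icc 0 δ, Φ h := by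
    rw [← lintegral_indicator measurableSet_Icc, ← lintegral_indicator measurableSet_Icc,
      ← lintegral_neg_eq_self]
    refine lintegral_congr fun h => ?_
    have hmem : -h ∈ Icc (-δ) 0 ↔ h ∈ Icc 0 δ := by
      simp only [mem_Icc, neg_le_neg_iff, neg_nonpos, and_comm]
    simp only [indicator_apply, hmem, Φ, lintegral_add_neg_eq_of_symm hsymm]
  calc ∫⁻ s, ∫⁻ t, (Icc (-δ) δ).indicator 1 (t - s) * G s t
      = ∫⁻ h in Icc (-δ) δ, Φ h := by
        rw [lintegral_lintegral_eq_lintegral_lintegral_add hmeas,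
          ← lintegral_indicator measurableSet_Icc]
        refine lintegral_congr fun h => ?_
        by_cases hh : h ∈ Icc (-δ) δ <;> simp [hh, Φ]
    _ ≤ (∫⁻ h in Icc (-δ) 0, Φ h) + ∫⁻ h in Icc 0 δ, Φ h := by
        rcases le_or_gt 0 δ with hδ | hδ
        · rw [← Icc_union_Icc_eq_Icc (by linarith) hδ]
          exact lintegral_union_le _ _ _
        · simp [Icc_eq_empty_of_lt (show δ < -δ by linarith)]
    _ = 2 * ∫⁻ h in Icc 0 δ, Φ h := by rw [hreflect, two_mul]

end Strip

theorem le_ofReal_rpow_mul_biSup_sq {φ : ℝ → ℝ≥0∞} {S : Set ℝ} {α h : ℝ} (hS : h ∈ S)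
    (hh : 0 < h) :
    φ h ≤ ENNReal.ofReal h ^ (2 * α)
      * (⨆ x ∈ S, ENNReal.ofReal x ^ (-α) * φ x ^ ((1 : ℝ) / 2)) ^ 2 := by
  set M := ⨆ x ∈ S, ENNReal.ofReal x ^ (-α) * φ x ^ ((1 : ℝ) / 2)
  have h0 : ENNReal.ofReal h ≠ 0 := (ENNReal.ofReal_pos.2 hh).ne'
  have hM : ENNReal.ofReal h ^ (-α) * φ h ^ ((1 : ℝ) / 2) ≤ M :=
    le_biSup (fun x => ENNReal.ofReal x ^ (-α) * φ x ^ ((1 : ℝ) / 2)) hS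
  have hsqrt : φ h ^ ((1 : ℝ) / 2) ≤ ENNReal.ofReal h ^ α * M := by
    calc φ h ^ ((1 : ℝ) / 2)
        = ENNReal.ofReal h ^ α * (ENNReal.ofReal h ^ (-α) * φ h ^ ((1 : ℝ) / 2)) := by
          rw [← mul_assoc, ← ENNReal.rpow_add _ _ h0 ENNReal.ofReal_ne_top, add_neg_cancel,
            ENNReal.rpow_zero, one_mul]
      _ ≤ ENNReal.ofReal h ^ α * M := by gcongr
  calc φ h = (φ h ^ ((1 : ℝ) / 2)) ^ (2 : ℝ) := by
        rw [← ENNReal.rpow_mul]; norm_num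
    _ ≤ (ENNReal.ofReal h ^ α * M) ^ (2 : ℝ) := by gcongr
    _ = ENNReal.ofReal h ^ (2 * α) * M ^ 2 := by
        rw [ENNReal.mul_rpow_of_nonneg _ _ zero_le_two, ← ENNReal.rpow_mul, mul_comm α,
          ENNReal.rpow_two]

section Oscillation

variable {T : ℝ} {N n : ℕ} {H : Type*} [NormedAddCommGroup H]

theorem Jint_subset_Icc (hτ : 0 ≤ T / (N + 1)) (m : ℕ) :
    Jint T N m
      ⊆ Icc (m * (T / (N + 1)) - T / (N + 1) / 2) (m * (T / (N + 1)) + T / (N + 1) / 2) := by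
  intro t ht
  unfold Jint at ht
  split_ifs at ht with hm
  · subst hm
    exact ⟨by push_cast; linarith [ht.1], by simpa using ht.2⟩
  · exact ht

theorem Jint_subset_Icc_zero (hT : 0 ≤ T) {m : ℕ} (hm : m ≤ N) : Jint T N m ⊆ Icc 0 T := by
  have hτ : 0 ≤ T / (N + 1) := by positivity
  have hTτ : T = (N + 1) * (T / (N + 1)) := by field_simp
  have hmN : (m : ℝ) * (T / (N + 1)) ≤ N * (T / (N + 1)) := by gcongr
  have hNτ : 0 ≤ N * (T / (N + 1)) := by positivity
  intro t ht
  simp only [Jint] at ht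
  split_ifs at ht with hm0
  · exact ⟨ht.1, by linarith [ht.2]⟩
  · have h1 : (1 : ℝ) ≤ m := by exact_mod_cast Nat.one_le_iff_ne_zero.2 hm0
    have : T / (N + 1) ≤ m * (T / (N + 1)) := by nlinarith
    exact ⟨by linarith [ht.1], by linarith [ht.2]⟩

theorem aWeight_le_two (hτ : 0 < T / (N + 1)) (hn : 1 ≤ n) (t : ℝ) : aWeight T N n t ≤ 2 := by
  have piece : ∀ {S : Set ℝ} {φ : ℝ → ℝ}, (∀ s ∈ S, φ s ≤ 1) → S.indicator φ t ≤ 1 :=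
    fun h => indicator_apply_le' (h t) fun _ => zero_le_one
  have hJ := Jint_subset_Icc (T := T) (N := N) hτ.le
  unfold aWeight
  split_ifs with h1
  · subst h1
    refine (add_le_add (piece fun _ _ => le_rfl) (piece fun s hs => ?_)).trans one_add_one_eq_two.le
    have := (hJ 1 hs).1
    rw [div_le_one hτ]; push_cast at this; linarith
  · have hcast : ((n - 1 : ℕ) : ℝ) = n - 1 := by push_cast [Nat.cast_sub hn]; ring
    refine (add_le_add (piece fun s hs => ?_) (piece fun s hs => ?_)).trans one_add_one_eq_two.le
    · have := (hJ _ hs).2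
      rw [hcast] at this
      rw [div_le_one hτ]; linarith
    · have := (hJ _ hs).1
      rw [div_le_one hτ]; linarith

theorem aWeight_eq_zero_of_notMem (hn : 1 ≤ n) {t : ℝ} (h1 : t ∉ Jint T N (n - 1))
    (h2 : t ∉ Jint T N n) :
    aWeight T N n t = 0 := by
  unfold aWeight
  split_ifs with hn1
  · subst hn1
    simp_all
  · simp [indicator_of_notMem, h1, h2]

theorem ofReal_aWeight_le (hT : 0 < T) (hn : 1 ≤ n) (hnN : n ≤ N) (t : ℝ) :
    ENNReal.ofReal (aWeight T N n t)
      ≤ 2 * ((Icc 0 T).indicator 1 t * (Icc (n * (T / (N + 1)) - 3 * (T / (N + 1)) / 2)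
          (n * (T / (N + 1)) + T / (N + 1) / 2)).indicator 1 t) := by
  have hτ : 0 < T / (N + 1) := by positivity
  by_cases ht : t ∈ Jint T N (n - 1) ∪ Jint T N n
  · have hT' : t ∈ Icc 0 T := by
      rcases ht with ht | ht
      · exact Jint_subset_Icc_zero hT.le (by omega) ht
      · exact Jint_subset_Icc_zero hT.le hnN ht
    have hwin : t ∈ Icc (n * (T / (N + 1)) - 3 * (T / (N + 1)) / 2)
        (n * (T / (N + 1)) + T / (N + 1) / 2) := by
      have hcast : ((n - 1 : ℕ) : ℝ) = n - 1 := by push_cast [Nat.cast_sub hn]; ring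
      rcases ht with ht | ht
      · have := Jint_subset_Icc hτ.le _ ht
        rw [hcast] at this
        constructor <;> linarith [this.1, this.2]
      · have := Jint_subset_Icc hτ.le _ ht
        constructor <;> linarith [this.1, this.2]
    simp only [indicator_of_mem hT', indicator_of_mem hwin, Pi.one_apply, mul_one]
    exact (ENNReal.ofReal_le_ofReal (aWeight_le_two hτ hn t)).trans_eq (ENNReal.ofReal_ofNat 2)
  · rw [mem_union, not_or] at ht
    simp [aWeight_eq_zero_of_notMem hn ht.1 ht.2]

variable (T) in
noncomputable def sqDistIcc (f : ℝ → H) (s t : ℝ) : ℝ≥0∞ :=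
  (Icc 0 T).indicator 1 s * (Icc 0 T).indicator 1 t * ENNReal.ofReal (‖f s - f t‖ ^ 2)

theorem measurable_sqDistIcc {f : ℝ → H} (hf : StronglyMeasurable f) :
    Measurable (uncurry (sqDistIcc T f)) := by
  have hdiff : StronglyMeasurable fun p : ℝ × ℝ => f p.1 - f p.2 :=
    (hf.comp_measurable measurable_fst).sub (hf.comp_measurable measurable_snd)
  have hind : Measurable ((Icc 0 T).indicator (1 : ℝ → ℝ≥0∞)) :=
    measurable_one.indicator measurableSet_Icc
  exact ((hind.comp measurable_fst).mul (hind.comp measurable_snd)).mul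
    (ENNReal.measurable_ofReal.comp (hdiff.norm.measurable.pow_const 2))

theorem sqDistIcc_comm (f : ℝ → H) (s t : ℝ) : sqDistIcc T f s t = sqDistIcc T f t s := by
  simp only [sqDistIcc, norm_sub_rev (f s), mul_comm ((Icc 0 T).indicator 1 s)]

theorem lintegral_sqDistIcc_add_le (f : ℝ → H) (h : ℝ) :
    ∫⁻ s, sqDistIcc T f s (s + h) ≤ sqIncrementNorm T f h := by
  rw [sqIncrementNorm, restrict_Ioc_eq_restrict_Icc, ← lintegral_indicator measurableSet_Icc]
  refine lintegral_mono fun s => ?_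
  by_cases hs : s ∈ Icc 0 (T - h)
  · rw [indicator_of_mem hs, sqDistIcc, norm_sub_rev]
    calc _ ≤ 1 * 1 * ENNReal.ofReal (‖f (s + h) - f s‖ ^ 2) := by
          gcongr <;> exact indicator_apply_le' (fun _ => le_rfl) fun _ => zero_le_one
      _ = _ := by rw [one_mul, one_mul]
  · have : s ∉ Icc 0 T ∨ s + h ∉ Icc 0 T := by
      by_contra! hc
      exact hs ⟨hc.1.1, by linarith [hc.2.2]⟩
    rcases this with h0 | h0 <;> simp [sqDistIcc, h0]

theorem sum_lintegral_aWeight_le (hT : 0 < T) (f : ℝ → H) :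
    ∑ n ∈ Finset.Icc 1 N, ∫⁻ s, ∫⁻ t, ENNReal.ofReal (aWeight T N n s)
        * ENNReal.ofReal (aWeight T N n t) * ENNReal.ofReal (‖f s - f t‖ ^ 2)
      ≤ 12 * ∫⁻ s, ∫⁻ t,
          (Icc (-(2 * (T / (N + 1)))) (2 * (T / (N + 1)))).indicator 1 (t - s)
            * sqDistIcc T f s t := by
  have hτ : 0 < T / (N + 1) := by positivity
  set τ := T / (N + 1)
  set w : ℕ → ℝ → ℝ≥0∞ := fun n => (Icc (n * τ - 3 * τ / 2) (n * τ + τ / 2)).indicator 1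
  have hpoint : ∀ n ∈ Finset.Icc 1 N, ∀ s t, ENNReal.ofReal (aWeight T N n s)
      * ENNReal.ofReal (aWeight T N n t) * ENNReal.ofReal (‖f s - f t‖ ^ 2)
      ≤ 4 * (sqDistIcc T f s t * (w n s * w n t)) := by
    intro n hn s t
    obtain ⟨hn1, hnN⟩ := Finset.mem_Icc.1 hn
    calc _ ≤ 2 * ((Icc 0 T).indicator 1 s * w n s) * (2 * ((Icc 0 T).indicator 1 t * w n t))
          * ENNReal.ofReal (‖f s - f t‖ ^ 2) := by
          gcongr <;> exact ofReal_aWeight_le hT hn1 hnN _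
      _ = _ := by simp only [sqDistIcc]; ring
  have hcount : ∀ s t, ∑ n ∈ Finset.Icc 1 N, 4 * (sqDistIcc T f s t * (w n s * w n t))
      ≤ 12 * ((Icc (-(2 * τ)) (2 * τ)).indicator 1 (t - s) * sqDistIcc T f s t) := by
    intro s t
    rw [← Finset.mul_sum, ← Finset.mul_sum]
    calc 4 * (sqDistIcc T f s t * ∑ n ∈ Finset.Icc 1 N, w n s * w n t)
        ≤ 4 * (sqDistIcc T f s t * (3 * (Icc (-(2 * τ)) (2 * τ)).indicator 1 (t - s))) := by
          gcongr
          exact sum_indicator_mul_indicator_le hτ (by linarith) _ s t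
      _ = _ := by ring
  calc _ ≤ ∑ n ∈ Finset.Icc 1 N, ∫⁻ s, ∫⁻ t, 4 * (sqDistIcc T f s t * (w n s * w n t)) :=
        Finset.sum_le_sum fun n hn => lintegral_mono fun s => lintegral_mono fun t =>
          hpoint n hn s t
    _ ≤ ∫⁻ s, ∫⁻ t, ∑ n ∈ Finset.Icc 1 N, 4 * (sqDistIcc T f s t * (w n s * w n t)) :=
        (Finset.sum_lintegral_le_lintegral_sum _ _).trans
          (lintegral_mono fun s => Finset.sum_lintegral_le_lintegral_sum _ _)
    _ ≤ ∫⁻ s, ∫⁻ t, 12 * ((Icc (-(2 * τ)) (2 * τ)).indicator 1 (t - s) * sqDistIcc T f s t) :=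
        lintegral_mono fun s => lintegral_mono fun t => hcount s t
    _ = _ := by
        simp only [lintegral_const_mul' _ _ (by norm_num : (12 : ℝ≥0∞) ≠ ⊤)]

theorem setLIntegral_sqIncrementNorm_le {α δ : ℝ} (hα : 0 ≤ α) (hδT : δ ≤ T)
    (f : ℝ → H) :
    ∫⁻ h in Icc 0 δ, sqIncrementNorm T f h
      ≤ ENNReal.ofReal δ ^ (2 * α)
        * (⨆ h ∈ Ioo (0 : ℝ) T, ENNReal.ofReal h ^ (-α) * sqIncrementNorm T f h ^ ((1 : ℝ) / 2)) ^ 2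
        * ENNReal.ofReal δ := by
  set M := ⨆ h ∈ Ioo (0 : ℝ) T, ENNReal.ofReal h ^ (-α) * sqIncrementNorm T f h ^ ((1 : ℝ) / 2)
  rw [← restrict_Ioo_eq_restrict_Icc]
  calc ∫⁻ h in Ioo 0 δ, sqIncrementNorm T f h
      ≤ ∫⁻ _ in Ioo 0 δ, ENNReal.ofReal δ ^ (2 * α) * M ^ 2 := by
        refine setLIntegral_mono measurable_const fun h hh => ?_
        calc sqIncrementNorm T f h ≤ ENNReal.ofReal h ^ (2 * α) * M ^ 2 :=
              le_ofReal_rpow_mul_biSup_sq ⟨hh.1, hh.2.trans_le hδT⟩ hh.1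
          _ ≤ _ := by gcongr; exact hh.2.le
    _ = _ := by rw [setLIntegral_const, Real.volume_Ioo, sub_zero]

theorem lintegral_lintegral_indicator_sub_mul_sqDistIcc_le {α δ : ℝ} (hα : 0 ≤ α) (hδT : δ ≤ T)
    {f : ℝ → H} (hf : StronglyMeasurable f) :
    ∫⁻ s, ∫⁻ t, (Icc (-δ) δ).indicator 1 (t - s) * sqDistIcc T f s t
      ≤ 2 * (ENNReal.ofReal δ ^ (2 * α)
        * (⨆ h ∈ Ioo (0 : ℝ) T, ENNReal.ofReal h ^ (-α) * sqIncrementNorm T f h ^ ((1 : ℝ) / 2)) ^ 2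
        * ENNReal.ofReal δ) :=
  calc _ ≤ 2 * ∫⁻ h in Icc 0 δ, ∫⁻ s, sqDistIcc T f s (s + h) :=
        lintegral_lintegral_indicator_sub_le (measurable_sqDistIcc hf) (sqDistIcc_comm f) δ
    _ ≤ 2 * ∫⁻ h in Icc 0 δ, sqIncrementNorm T f h := by
        gcongr with h; exact lintegral_sqDistIcc_add_le f h
    _ ≤ _ := by gcongr; exact setLIntegral_sqIncrementNorm_le hα hδT f

end Oscillation

/-- Temporal tempOsc bound, Nikolskii case: for `α ∈ (0,1)` there is a constant `C`
depending only on `α` such that, whenever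
`M := sup_{h ∈ (0,T)} h^{−α} ‖τ_h f‖_{L²}` is finite,
`(1/τ) Σ_{n=1}^N ∫∫ a_n(s) a_n(t) ‖f(s) − f(t)‖² dt ds ≤ C τ^{2α} M²`. -/
theorem temporal_oscillation_nikolskii (α : ℝ) (hα : α ∈ Set.Ioo (0 : ℝ) 1) :
    ∃ C : ℝ, 0 < C ∧
      ∀ (H : Type) [NormedAddCommGroup H] [InnerProductSpace ℝ H] [CompleteSpace H],
        ∀ (T : ℝ), 0 < T → ∀ (N : ℕ), 1 ≤ N → ∀ f : ℝ → H, StronglyMeasurable f →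
          (⨆ h ∈ Set.Ioo (0 : ℝ) T,
              ENNReal.ofReal h ^ (-α) * sqIncrementNorm T f h ^ ((1 : ℝ) / 2)) ≠ ⊤ →
          tempOsc T N f
            ≤ ENNReal.ofReal C * ENNReal.ofReal (T / (N + 1)) ^ (2 * α)
              * (⨆ h ∈ Set.Ioo (0 : ℝ) T,
                  ENNReal.ofReal h ^ (-α) * sqIncrementNorm T f h ^ ((1 : ℝ) / 2)) ^ 2 := by
  refine ⟨48 * 2 ^ (2 * α), by positivity, fun H _ _ _ T hT N hN f hf _ => ?_⟩
  set M := ⨆ h ∈ Ioo (0 : ℝ) T, ENNReal.ofReal h ^ (-α) * sqIncrementNorm T f h ^ ((1 : ℝ) / 2)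
  set τ := T / (N + 1)
  have hτ0 : ENNReal.ofReal τ ≠ 0 := (ENNReal.ofReal_pos.2 (by positivity)).ne'
  have h2τ : 2 * τ ≤ T := by
    have : (2 : ℝ) ≤ N + 1 := by norm_cast; omega
    calc 2 * τ ≤ (N + 1) * τ := by gcongr
      _ = T := by simp only [τ]; field_simp
  calc tempOsc T N f
      ≤ (ENNReal.ofReal τ)⁻¹ * (12 * (2 * (ENNReal.ofReal (2 * τ) ^ (2 * α) * M ^ 2
          * ENNReal.ofReal (2 * τ)))) := by
        rw [tempOsc]
        gcongr
        exact (sum_lintegral_aWeight_le hT f).trans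
          (by gcongr; exact lintegral_lintegral_indicator_sub_mul_sqDistIcc_le hα.1.le h2τ hf)
    _ = (ENNReal.ofReal τ)⁻¹ * ENNReal.ofReal τ
          * (48 * 2 ^ (2 * α) * ENNReal.ofReal τ ^ (2 * α) * M ^ 2) := by
        rw [ENNReal.ofReal_mul zero_le_two, ENNReal.mul_rpow_of_nonneg _ _ (by linarith [hα.1]),
          ENNReal.ofReal_ofNat]
        ring
    _ = ENNReal.ofReal (48 * 2 ^ (2 * α)) * ENNReal.ofReal τ ^ (2 * α) * M ^ 2 := by
        rw [ENNReal.inv_mul_cancel hτ0 ENNReal.ofReal_ne_top, one_mul,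
          ENNReal.ofReal_mul (by norm_num), ← ENNReal.ofReal_rpow_of_pos two_pos,
          ENNReal.ofReal_ofNat, ENNReal.ofReal_ofNat]
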